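/- arXiv:0809.4695 — 3 statements merged into one kernel-verified Lean document; each statement's English description precedes it below -/
import Mathlib

section
/- Let p be an odd prime and let P and Q be finite Camina p-groups of nilpotence class 2. Then |℧₁(P)| = |℧₁(Q)| if and only if |P : Ω₁(P)| = |Q : Ω₁(Q)|. -/
/-- A group is a Camina group if the conjugacy class of every element outside the
commutator subgroup equals its left coset of the commutator subgroup. -/
def IsCamina (G : Type*) [Group G] : Prop :=
  ∀ g : G, g ∉ commutator G →
    {x : G | IsConj g x} = {x : G | ∃ c ∈ commutator G, x = g * c}

/-- A group has nilpotence class exactly 2: it is nonabelian and its commutator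
subgroup is central. -/
def IsClassTwo (G : Type*) [Group G] : Prop :=
  (∃ a b : G, a * b ≠ b * a) ∧ commutator G ≤ Subgroup.center G

/-- `℧₁(G)`: the subgroup generated by the `p`-th powers. -/
def agemo (p : ℕ) (G : Type*) [Group G] : Subgroup G :=
  Subgroup.closure {x : G | ∃ g : G, g ^ p = x}

/-- `Ω₁(G)`: the subgroup generated by the elements of order dividing `p`. -/
def omega1 (p : ℕ) (G : Type*) [Group G] : Subgroup G :=
  Subgroup.closure {x : G | x ^ p = 1}

/-- The set of irreducible complex characters of `G`. -/
def IrrChar (G : Type) [Group G] : Set (G → ℂ) :=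
  {χ | ∃ V : FDRep ℂ G, CategoryTheory.Simple V ∧ χ = FDRep.character V}

/-- Two groups form a Brauer pair: they are nonisomorphic, and there are bijections
between conjugacy classes and between irreducible characters compatible with character
values and with all power maps. -/
def IsBrauerPair (G H : Type) [Group G] [Group H] : Prop :=
  ¬ Nonempty (G ≃* H) ∧
  ∃ (f : ConjClasses G ≃ ConjClasses H) (e : IrrChar G ≃ IrrChar H),
    (∀ χ : IrrChar G, ∀ g : G, ∀ h : H,
      f (ConjClasses.mk g) = ConjClasses.mk h → χ.1 g = (e χ).1 h) ∧
    (∀ (n : ℤ) (g : G) (h : H),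
      f (ConjClasses.mk g) = ConjClasses.mk h →
        f (ConjClasses.mk (g ^ n)) = ConjClasses.mk (h ^ n))

/-!
If `g ^ p ∉ G'` in a Camina `p`-group `G` of class 2, the conjugates `y g^p y⁻¹ = g^p ⁅g⁻¹, y⁆ ^ p`
fill the coset `g^p G'`, so every element of `G'` is a `p`-th power in `G'`; in a finite `p`-group
this forces `G' = 1`, contradicting that `G` is nonabelian. Hence `G^p ≤ G' ≤ Z(G)`, and since
`⁅a, b⁆ ^ p = ⁅a ^ p, b⁆ = 1`, the subgroup `G'` has exponent `p`. For odd `p` the identity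
`(a * b) ^ p = ⁅b, a⁆ ^ (p.choose 2) * a ^ p * b ^ p` then makes `x ↦ x ^ p` an endomorphism of `G`,
with image `℧₁(G)` and kernel `Ω₁(G)`, so `|℧₁(G)| = |G : Ω₁(G)|`.
-/

open Function Subgroup
open scoped commutatorElement

section CentralCommutator

variable {G : Type*} [Group G]

theorem commutatorElement_pow_left_of_mem_center {a b : G} (h : ⁅a, b⁆ ∈ center G) (n : ℕ) :
    ⁅a ^ n, b⁆ = ⁅a, b⁆ ^ n := by
  induction n with
  | zero => simp
  | succ n ih =>
    have hcomm : a * ⁅a, b⁆ ^ n = ⁅a, b⁆ ^ n * a := mem_center_iff.mp (pow_mem h n) a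
    rw [pow_succ', commutatorElement_mul_left_eq_conj_mul, ih, hcomm, pow_succ]
    group

theorem mul_pow_of_commutatorElement_mem_center {a b : G} (h : ⁅b, a⁆ ∈ center G) (n : ℕ) :
    (a * b) ^ n = ⁅b, a⁆ ^ n.choose 2 * a ^ n * b ^ n := by
  induction n with
  | zero => simp
  | succ n ih =>
    have hswap : b ^ n * a = ⁅b, a⁆ ^ n * a * b ^ n := by
      rw [← commutatorElement_pow_left_of_mem_center h n, commutatorElement_def]
      group
    have hcomm : a ^ n * ⁅b, a⁆ ^ n = ⁅b, a⁆ ^ n * a ^ n := mem_center_iff.mp (pow_mem h n) _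
    calc (a * b) ^ (n + 1)
        = ⁅b, a⁆ ^ n.choose 2 * a ^ n * (b ^ n * a) * b := by rw [pow_succ, ih]; group
      _ = ⁅b, a⁆ ^ n.choose 2 * (a ^ n * ⁅b, a⁆ ^ n) * a * b ^ (n + 1) := by
          rw [hswap, pow_succ]; group
      _ = ⁅b, a⁆ ^ (n + 1).choose 2 * a ^ (n + 1) * b ^ (n + 1) := by
          rw [hcomm, Nat.choose_succ_succ', Nat.choose_one_right, pow_add, pow_succ]; group

theorem mul_pow_prime_of_commutatorElement_pow_eq_one {p : ℕ} (hp : p.Prime) (hodd : Odd p)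
    {a b : G} (h : ⁅b, a⁆ ∈ center G) (hpow : ⁅b, a⁆ ^ p = 1) :
    (a * b) ^ p = a ^ p * b ^ p := by
  have htwo : 2 < p := hp.two_le.lt_of_ne fun hp2 => by subst hp2; exact absurd hodd (by decide)
  obtain ⟨k, hk⟩ := hp.dvd_choose_self two_ne_zero htwo
  rw [mul_pow_of_commutatorElement_mem_center h, hk, pow_mul, hpow, one_pow, one_mul]

end CentralCommutator

theorem card_agemo_eq_index_omega1_of_mul_pow {G : Type*} [Group G] {n : ℕ}
    (h : ∀ a b : G, (a * b) ^ n = a ^ n * b ^ n) :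
    Nat.card (agemo n G) = (omega1 n G).index := by
  let φ : G →* G := MonoidHom.mk' (· ^ n) h
  have hrange : agemo n G = φ.range := φ.range.closure_eq
  have hker : omega1 n G = φ.ker := φ.ker.closure_eq
  rw [hrange, hker, index_ker]

theorem IsPGroup.eq_one_of_injective_pow {p : ℕ} {G : Type*} [Group G] (hG : IsPGroup p G)
    (h : Injective fun x : G => x ^ p) (g : G) : g = 1 := by
  obtain ⟨k, hk⟩ := hG g
  apply h.iterate k
  simp only [pow_iterate, hk, one_pow]

namespace IsCamina

variable {p : ℕ} {G : Type*} [Group G] [Finite G]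

theorem pow_mem_commutator (hG : IsPGroup p G) (hcam : IsCamina G) (h2 : IsClassTwo G) (g : G) :
    g ^ p ∈ commutator G := by
  obtain ⟨⟨a, b, hab⟩, hcent⟩ := h2
  by_contra hg
  have hpow_surj : Surjective fun x : commutator G => x ^ p := by
    rintro ⟨c, hc⟩
    have hconj : g ^ p * c ∈ {x | IsConj (g ^ p) x} := by
      rw [hcam _ hg]
      exact ⟨c, hc, rfl⟩
    obtain ⟨y, hy⟩ := isConj_iff.mp hconj
    refine ⟨⟨⁅g⁻¹, y⁆, commutator_mem_commutator (mem_top _) (mem_top _)⟩, Subtype.ext ?_⟩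
    rw [coe_pow, ← commutatorElement_pow_left_of_mem_center
      (hcent (commutator_mem_commutator (mem_top _) (mem_top _))), inv_pow,
      commutatorElement_def, inv_inv, mul_assoc, mul_assoc, ← mul_assoc y, hy]
    group
  have hpow_inj := Finite.injective_iff_surjective.mpr hpow_surj
  have hab_mem : ⁅a, b⁆ ∈ commutator G := commutator_mem_commutator (mem_top _) (mem_top _)
  have hab_one := congrArg Subtype.val
    ((hG.to_subgroup _).eq_one_of_injective_pow hpow_inj ⟨_, hab_mem⟩)
  exact hab (commutatorElement_eq_one_iff_mul_comm.mp hab_one)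

theorem pow_eq_one_of_mem_commutator (hG : IsPGroup p G) (hcam : IsCamina G)
    (h2 : IsClassTwo G) {x : G} (hx : x ∈ commutator G) : x ^ p = 1 := by
  have hcent := h2.2
  rw [commutator_eq_closure] at hx
  induction hx using closure_induction with
  | mem _ hz =>
    obtain ⟨a, b, rfl⟩ := hz
    have hmem := hcent (commutator_mem_commutator (mem_top a) (mem_top b))
    rw [← commutatorElement_pow_left_of_mem_center hmem, commutatorElement_eq_one_iff_mul_comm]
    exact (mem_center_iff.mp (hcent (pow_mem_commutator hG hcam h2 a)) b).symm
  | one => exact one_pow p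
  | mul y z hy _ hy1 hz1 =>
    rw [← commutator_eq_closure] at hy
    have hyz : Commute y z := (mem_center_iff.mp (hcent hy) z).symm
    rw [hyz.mul_pow, hy1, hz1, one_mul]
  | inv y _ hy1 => rw [inv_pow, hy1, inv_one]

theorem card_agemo_eq_index_omega1 (hp : p.Prime) (hodd : Odd p) (hG : IsPGroup p G)
    (hcam : IsCamina G) (h2 : IsClassTwo G) :
    Nat.card (agemo p G) = (omega1 p G).index :=
  card_agemo_eq_index_omega1_of_mul_pow fun a b =>
    have hba : ⁅b, a⁆ ∈ commutator G := commutator_mem_commutator (mem_top b) (mem_top a)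
    mul_pow_prime_of_commutatorElement_pow_eq_one hp hodd (h2.2 hba)
      (pow_eq_one_of_mem_commutator hG hcam h2 hba)

end IsCamina

/-- For Camina `p`-groups `P`, `Q` of nilpotence class 2 with `p` odd,
`|℧₁(P)| = |℧₁(Q)|` iff `|P : Ω₁(P)| = |Q : Ω₁(Q)|`. -/
theorem card_agemo_eq_iff_index_omega_eq {p : ℕ} (hp : p.Prime) (hodd : Odd p)
    (P Q : Type*) [Group P] [Group Q] [Finite P] [Finite Q]
    (hPp : IsPGroup p P) (hQp : IsPGroup p Q)
    (hPcam : IsCamina P) (hQcam : IsCamina Q)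
    (hP2 : IsClassTwo P) (hQ2 : IsClassTwo Q) :
    Nat.card (agemo p P) = Nat.card (agemo p Q) ↔
      (omega1 p P).index = (omega1 p Q).index := by
  rw [hPcam.card_agemo_eq_index_omega1 hp hodd hPp hP2,
    hQcam.card_agemo_eq_index_omega1 hp hodd hQp hQ2]
end

section
/- Let p be a prime and let P be a finite Camina p-group of nilpotence class 2. Then Z(P) = P', and both P' and P/P' are elementary abelian p-groups. -/
open Subgroup

open scoped commutatorElement

theorem not_surjective_pow_of_prime_dvd_card {H : Type*} [Group H] [Finite H] {p : ℕ}
    (hp : p.Prime) (hpH : p ∣ Nat.card H) : ¬ Function.Surjective (fun x : H => x ^ p) := by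
  have := Fact.mk hp
  intro hsurj
  obtain ⟨x, hx⟩ := exists_prime_orderOf_dvd_card' p hpH
  have hx1 : x = 1 := Finite.injective_iff_surjective.mpr hsurj <| by
    simp only [← hx, pow_orderOf_eq_one, one_pow]
  rw [hx1, orderOf_one] at hx
  exact hp.one_lt.ne hx

theorem conj_pow_eq_mul_pow_of_conj_eq_mul {G : Type*} [Group G] {x g c : G}
    (hc : c ∈ center G) (h : x * g * x⁻¹ = g * c) (n : ℕ) :
    x * g ^ n * x⁻¹ = g ^ n * c ^ n := by
  rw [← conj_pow, h, Commute.mul_pow (mem_center_iff.mp hc g)]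

namespace IsCamina

variable {G : Type*} [Group G]

theorem exists_conj_eq_mul (hG : IsCamina G) {g c : G} (hg : g ∉ commutator G)
    (hc : c ∈ commutator G) : ∃ x : G, x * g * x⁻¹ = g * c := by
  have hgc : g * c ∈ {x : G | IsConj g x} := by
    rw [hG g hg]
    exact ⟨c, hc, rfl⟩
  exact isConj_iff.mp hgc

theorem center_le_commutator (hG : IsCamina G) (hK : commutator G ≠ ⊥) :
    center G ≤ commutator G := by
  intro z hz
  by_contra hzK
  obtain ⟨c, hc1⟩ := ne_bot_iff_exists_ne_one.mp hK
  obtain ⟨x, hx⟩ := hG.exists_conj_eq_mul hzK c.2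
  rw [mem_center_iff.mp hz x, mul_inv_cancel_right, left_eq_mul] at hx
  exact hc1 (Subtype.ext hx)

theorem pow_eq_one_of_pow_mem_center (hG : IsCamina G) (hKZ : commutator G ≤ center G)
    {g : G} (hg : g ∉ commutator G) {n : ℕ} (hgn : g ^ n ∈ center G) {c : G}
    (hc : c ∈ commutator G) : c ^ n = 1 := by
  obtain ⟨x, hx⟩ := hG.exists_conj_eq_mul hg hc
  have hconj := conj_pow_eq_mul_pow_of_conj_eq_mul (hKZ hc) hx n
  rw [mem_center_iff.mp hgn x, mul_inv_cancel_right, left_eq_mul] at hconj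
  exact hconj

theorem surjective_pow_of_pow_notMem (hG : IsCamina G) (hKZ : commutator G ≤ center G)
    {g : G} {n : ℕ} (hgn : g ^ n ∉ commutator G) :
    Function.Surjective (fun e : commutator G => e ^ n) := by
  rintro ⟨c, hc⟩
  obtain ⟨x, hx⟩ := hG.exists_conj_eq_mul hgn hc
  have he : ⁅g⁻¹, x⁆ ∈ commutator G :=
    commutator_mem_commutator (mem_top g⁻¹) (mem_top x)
  have hconj : x * g * x⁻¹ = g * ⁅g⁻¹, x⁆ := by group
  rw [conj_pow_eq_mul_pow_of_conj_eq_mul (hKZ he) hconj, mul_right_inj] at hx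
  exact ⟨⟨_, he⟩, Subtype.ext hx⟩

theorem pow_mem_commutator_s7 [Finite G] (hG : IsCamina G) (hKZ : commutator G ≤ center G)
    {p : ℕ} (hp : p.Prime) (hpK : p ∣ Nat.card (commutator G)) (g : G) : g ^ p ∈ commutator G := by
  by_contra hgp
  exact not_surjective_pow_of_prime_dvd_card hp hpK (hG.surjective_pow_of_pow_notMem hKZ hgp)

end IsCamina

/-- For a finite Camina `p`-group `P` of nilpotence class 2, `Z(P) = P'`, and both
`P'` and `P/P'` are elementary abelian `p`-groups. -/
theorem center_eq_commutator_and_elem_abelian {p : ℕ} (hp : p.Prime)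
    (P : Type*) [Group P] [Finite P] (hPp : IsPGroup p P)
    (hPcam : IsCamina P) (hP2 : IsClassTwo P) :
    Subgroup.center P = commutator P ∧
    (∀ x y : P, x ∈ commutator P → y ∈ commutator P → x * y = y * x) ∧
    (∀ x ∈ commutator P, x ^ p = 1) ∧
    (∀ a b : P ⧸ commutator P, a * b = b * a) ∧
    (∀ a : P ⧸ commutator P, a ^ p = 1) := by
  have := Fact.mk hp
  obtain ⟨⟨a, b, hab⟩, hKZ⟩ := hP2
  have hZ : center P ≠ ⊤ := fun h => hab (mem_center_iff.mp (h ▸ mem_top b) a)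
  have hK : commutator P ≠ ⊥ := fun h => hZ ((commutator_eq_bot_iff_center_eq_top P).mp h)
  obtain ⟨g, hg⟩ : ∃ g : P, g ∉ commutator P := by
    by_contra! h
    exact hZ (top_le_iff.mp fun x _ => hKZ (h x))
  have hpK : p ∣ Nat.card (commutator P) :=
    ((hPp.to_subgroup _).card_eq_or_dvd).resolve_left (mt Subgroup.card_eq_one.mp hK)
  have hpow := hPcam.pow_mem_commutator_s7 hKZ hp hpK
  refine ⟨le_antisymm (hPcam.center_le_commutator hK) hKZ,
    fun x y hx _ => (mem_center_iff.mp (hKZ hx) y).symm,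
    fun c hc => hPcam.pow_eq_one_of_pow_mem_center hKZ hg (hKZ (hpow g)) hc,
    mul_comm (G := Abelianization P), ?_⟩
  intro a
  induction a using QuotientGroup.induction_on with
  | H x => rw [← QuotientGroup.mk_pow, QuotientGroup.eq_one_iff]; exact hpow x
end

section
/- Let G be a finite Camina group of nilpotence class 2. Then G is a VZ-group: every irreducible complex character of G of degree greater than 1 vanishes on G \ Z(G). -/
/-! If `χ(g) ≠ 0` for some `g ∉ Z(G)`, then `g ∉ G'`, so by the Camina property `g` is conjugate
to `g z` for every `z ∈ G'`. As `G'` is central, Schur's lemma makes `z` act by a scalar `c`, and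
`χ(g) = χ(g z) = c χ(g)` forces `c = 1`. Hence `G'` acts trivially, all of `G` acts by commuting
operators, hence by scalars, and an irreducible representation must be one-dimensional. -/

open CategoryTheory
open scoped commutatorElement

theorem MonoidHom.commute_apply_of_commutator_le_ker {G M : Type*} [Group G] [Monoid M]
    (f : G →* M) (h : commutator G ≤ f.ker) (a b : G) : Commute (f a) (f b) := by
  have hab : f ⁅a, b⁆ = 1 :=
    h (Subgroup.commutator_mem_commutator (Subgroup.mem_top a) (Subgroup.mem_top b))
  calc f a * f b = f (⁅a, b⁆ * (b * a)) := by rw [← map_mul, commutatorElement_def]; group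
    _ = f b * f a := by rw [map_mul, hab, one_mul, map_mul]

theorem IsCamina.isConj_mul {G : Type*} [Group G] (hcam : IsCamina G) {g z : G}
    (hg : g ∉ commutator G) (hz : z ∈ commutator G) : IsConj g (g * z) := by
  have hmem : g * z ∈ {x : G | ∃ c ∈ commutator G, x = g * c} := ⟨z, hz, rfl⟩
  rwa [← hcam g hg] at hmem

namespace FDRep

variable {k G : Type*} [Field k] [Monoid G]

def homOfCommute (V : FDRep k G) (f : V →ₗ[k] V) (hf : ∀ g, Commute f (V.ρ g)) : V ⟶ V :=
  ⟨⟨ModuleCat.ofHom f⟩, fun g => by ext x; exact LinearMap.congr_fun (hf g).eq x⟩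

theorem character_mul_of_ρ_eq_smul (V : FDRep k G) (g : G) {z : G} {c : k}
    (hz : V.ρ z = c • 1) : V.character (g * z) = c * V.character g := by
  rw [character, character, map_mul, hz, mul_smul_comm, mul_one, map_smul, smul_eq_mul]

variable [IsAlgClosed k]

theorem exists_eq_smul_one_of_commute (V : FDRep k G) [Simple V] (f : V →ₗ[k] V)
    (hf : ∀ g, Commute f (V.ρ g)) : ∃ c : k, f = c • 1 := by
  obtain ⟨c, hc⟩ := endomorphism_simple_eq_smul_id k (homOfCommute V f hf)
  exact ⟨c, (congrArg (fun φ : V ⟶ V => φ.hom.hom.hom) hc).symm⟩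

theorem exists_ρ_eq_smul_one_of_mem_center (V : FDRep k G) [Simple V] {z : G}
    (hz : z ∈ Submonoid.center G) : ∃ c : k, V.ρ z = c • 1 :=
  V.exists_eq_smul_one_of_commute (V.ρ z) fun g =>
    (Commute.map (Submonoid.mem_center_iff.mp hz g).symm V.ρ)

theorem finrank_le_one_of_commute (V : FDRep k G) [Simple V]
    (hρ : ∀ a b : G, Commute (V.ρ a) (V.ρ b)) : Module.finrank k V ≤ 1 := by
  have hscalar (f : V →ₗ[k] V) (g : G) : Commute f (V.ρ g) := by
    obtain ⟨c, hc⟩ := V.exists_eq_smul_one_of_commute (V.ρ g) (hρ g)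
    rw [hc]
    exact (Commute.one_right f).smul_right c
  -- every linear endomorphism is now equivariant, and Schur gives `dim End_G V = 1`
  let L : (V →ₗ[k] V) →ₗ[k] (V ⟶ V) :=
    { toFun := fun f => homOfCommute V f (hscalar f)
      map_add' := fun _ _ => rfl
      map_smul' := fun _ _ => rfl }
  have hL : Function.Injective L := fun f g h =>
    congrArg (fun φ : V ⟶ V => φ.hom.hom.hom) h
  have hle := LinearMap.finrank_le_finrank_of_injective hL
  rw [finrank_endomorphism_simple_eq_one k V, Module.finrank_linearMap] at hle
  nlinarith

end FDRep

theorem IsCamina.commutator_le_ker_ρ_of_character_ne_zero {k G : Type*} [Field k]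
    [IsAlgClosed k] [Group G] (hcam : IsCamina G) (hcen : commutator G ≤ Subgroup.center G)
    (V : FDRep k G) [Simple V] {g : G} (hg : g ∉ commutator G) (hχ : V.character g ≠ 0) :
    commutator G ≤ V.ρ.ker := by
  intro z hz
  obtain ⟨c, hc⟩ := V.exists_ρ_eq_smul_one_of_mem_center (hcen hz)
  obtain ⟨u, hu⟩ := hcam.isConj_mul hg hz
  have hχz : c * V.character g = V.character g := by
    rw [← V.character_mul_of_ρ_eq_smul g hc, ← mul_inv_eq_iff_eq_mul.mpr hu, FDRep.char_conj]
  have hc1 : c = 1 := mul_left_eq_self₀.mp hχz |>.resolve_right hχ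
  rw [MonoidHom.mem_ker, hc, hc1, one_smul]

theorem camina_classTwo_isVZ_general (G : Type) [Group G]
    (hcam : IsCamina G) (h2 : IsClassTwo G) :
    ∀ V : FDRep ℂ G, CategoryTheory.Simple V → 1 < Module.finrank ℂ V →
      ∀ g : G, g ∉ Subgroup.center G → V.character g = 0 := by
  intro V _ hdim g hg
  by_contra hχ
  have hker := hcam.commutator_le_ker_ρ_of_character_ne_zero h2.2 V (fun h => hg (h2.2 h)) hχ
  exact hdim.not_ge (V.finrank_le_one_of_commute (V.ρ.commute_apply_of_commutator_le_ker hker))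

/-- A finite Camina group of nilpotence class 2 is a VZ-group: every irreducible
complex character of degree greater than 1 vanishes off the center. -/
theorem camina_classTwo_isVZ (G : Type) [Group G] [Finite G]
    (hcam : IsCamina G) (h2 : IsClassTwo G) :
    ∀ V : FDRep ℂ G, CategoryTheory.Simple V → 1 < Module.finrank ℂ V →
      ∀ g : G, g ∉ Subgroup.center G → V.character g = 0 :=
  camina_classTwo_isVZ_general G hcam h2
end
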